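/- Let λ ∈ X and let v ∈ W be an element of minimal length ℓ(v) such that vλ is dominant. Then v t_λ is the unique element of minimal length in the set W t_λ = {u t_λ : u ∈ W} ⊂ W_aff; that is, ℓ(v t_λ) ≤ ℓ(u t_λ) for every u ∈ W, with equality only for u = v. -/

import Mathlib

open scoped BigOperators

/-- The data of a finite reduced crystallographic root system `Φ`, with a chosen system of
positive roots `pos` cut out by a homomorphism `f : X → ℝ` not vanishing on any root, inside a
finitely generated free abelian group `X` (the weight lattice).  For each root `α` we record its
coroot `coroot α : X →+ ℤ` and the associated reflection `s α : x ↦ x - ⟨x, α∨⟩ • α`, an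
automorphism of `X`.  The reflections preserve `Φ` and the coroots are equivariant for them. -/
structure RootSystemData (X : Type*) [AddCommGroup X] [Module.Free ℤ X] [Module.Finite ℤ X] where
  /-- the (finite) set of roots -/
  Φ : Finset X
  /-- the set of positive roots -/
  pos : Finset X
  /-- the coroot attached to each root, as a homomorphism `X → ℤ` -/
  coroot : X → (X →+ ℤ)
  /-- the reflection attached to each root -/
  s : X → AddAut X
  /-- a homomorphism `X → ℝ` cutting out the positive roots -/
  f : X →+ ℝ
  f_ne : ∀ α ∈ Φ, f α ≠ 0
  pos_def : ∀ α, α ∈ pos ↔ α ∈ Φ ∧ 0 < f α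
  pairing_self : ∀ α ∈ Φ, coroot α α = 2
  s_apply : ∀ α ∈ Φ, ∀ x : X, s α x = x - coroot α x • α
  s_stable : ∀ α ∈ Φ, ∀ β ∈ Φ, s α β ∈ Φ
  reduced : ∀ α ∈ Φ, ∀ n : ℤ, n • α ∈ Φ → n = 1 ∨ n = -1
  coroot_equivariant : ∀ α ∈ Φ, ∀ β ∈ Φ, ∀ x : X, coroot (s α β) x = coroot β ((-(s α)) x)

namespace RootSystemData

variable {X : Type*} [AddCommGroup X] [Module.Free ℤ X] [Module.Finite ℤ X] [DecidableEq X]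
  (R : RootSystemData X)

/-- The Weyl group `W`, the subgroup of `Aut(X)` generated by the reflections `s_α`, `α ∈ Φ`. -/
def W : AddSubgroup (AddAut X) := AddSubgroup.closure (R.s '' ↑R.Φ)

/-- A weight `λ` is dominant if `⟨λ, α∨⟩ ≥ 0` for all positive roots `α`. -/
def IsDominant (lam : X) : Prop := ∀ α ∈ R.pos, 0 ≤ R.coroot α lam

/-- `ℓ(u) = #{α ∈ Φ⁺ : uα ∈ −Φ⁺}` for `u` in the (finite) Weyl group. -/
def lenW (u : AddAut X) : ℕ := (R.pos.filter (fun α => -(u α) ∈ R.pos)).card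

/-- The Iwahori–Matsumoto length of the element `u t_λ` of the extended affine Weyl group
`W_aff = W ⋉ X`:
`ℓ(u t_λ) = Σ_{α ∈ Φ⁺ ∩ u⁻¹(Φ⁺)} |⟨λ, α∨⟩| + Σ_{α ∈ Φ⁺ ∩ u⁻¹(−Φ⁺)} |1 + ⟨λ, α∨⟩|`. -/
def lenAff (u : AddAut X) (lam : X) : ℕ :=
  ∑ α ∈ R.pos.filter (fun α => u α ∈ R.pos), (R.coroot α lam).natAbs
    + ∑ α ∈ R.pos.filter (fun α => -(u α) ∈ R.pos), (1 + R.coroot α lam).natAbs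

/-- The length of the translation `t_λ`: `ℓ(t_λ) = Σ_{α ∈ Φ⁺} |⟨λ, α∨⟩|`. -/
def lenT (lam : X) : ℕ := ∑ α ∈ R.pos, (R.coroot α lam).natAbs

end RootSystemData

/-!
Minimality of `v` pins down its inversion set: a positive root `α` is inverted by `v` exactly
when `⟨λ, α∨⟩ < 0`, because for `⟨λ, α∨⟩ = 0` an inverted `α` would make `v s_α` a shorter
element still sending `λ` to `vλ`. Since `|n| < |1 + n|` for `n ≥ 0` and `|1 + n| < |n|` for
`n < 0`, every summand of `ℓ(u t_λ)` is strictly minimised precisely when `u` inverts `α` iff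
`⟨λ, α∨⟩ < 0`, i.e. when `u` has the inversion set of `v`. Finally an element of `W` is
determined by its inversion set, because the only element of `W` preserving `Φ⁺` is the
identity: `W` is generated by the simple reflections, and the exchange condition shortens any
word that sends a positive root to a negative one.
-/

lemma min_le_ite (p : Prop) [Decidable p] (a b : ℕ) : min a b ≤ if p then a else b := by
  split_ifs <;> simp

lemma Finset.sum_min_le_sum_ite {ι : Type*} (s : Finset ι) (p : ι → Prop) [DecidablePred p]
    (a b : ι → ℕ) : ∑ i ∈ s, min (a i) (b i) ≤ ∑ i ∈ s, if p i then a i else b i :=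
  Finset.sum_le_sum fun _ _ => min_le_ite _ _ _

lemma Finset.iff_lt_of_sum_ite_eq_sum_min {ι : Type*} {s : Finset ι} {p : ι → Prop}
    [DecidablePred p] {a b : ι → ℕ} (hab : ∀ i ∈ s, a i ≠ b i)
    (h : ∑ i ∈ s, (if p i then a i else b i) = ∑ i ∈ s, min (a i) (b i)) :
    ∀ i ∈ s, p i ↔ a i < b i := by
  intro i hi
  have heq := (Finset.sum_eq_sum_iff_of_le (fun i _ => min_le_ite (p i) (a i) (b i))).1 h.symm i hi
  have hne := hab i hi
  by_cases hp : p i <;> simp only [hp, ↓reduceIte, true_iff, false_iff] at heq ⊢ <;> omega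

namespace RootSystemData

variable {X : Type*} [AddCommGroup X] [Module.Free ℤ X] [Module.Finite ℤ X]
  (R : RootSystemData X) {α β γ δ θ : X}

lemma mem_Φ_of_mem_pos (hα : α ∈ R.pos) : α ∈ R.Φ := ((R.pos_def α).1 hα).1

lemma f_pos_of_mem_pos (hα : α ∈ R.pos) : 0 < R.f α := ((R.pos_def α).1 hα).2

lemma mem_pos_iff (hα : α ∈ R.Φ) : α ∈ R.pos ↔ 0 < R.f α := by
  simp [R.pos_def, hα]

lemma s_apply_self (hα : α ∈ R.Φ) : R.s α α = -α := by
  rw [R.s_apply α hα, R.pairing_self α hα]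
  abel

lemma neg_mem_Φ (hα : α ∈ R.Φ) : -α ∈ R.Φ := R.s_apply_self hα ▸ R.s_stable α hα α hα

lemma neg_mem_pos_iff (hα : α ∈ R.Φ) : -α ∈ R.pos ↔ R.f α < 0 := by
  rw [R.mem_pos_iff (R.neg_mem_Φ hα), map_neg, neg_pos]

lemma neg_notMem_pos (hα : α ∈ R.pos) : -α ∉ R.pos := fun h =>
  lt_asymm (R.f_pos_of_mem_pos hα) ((R.neg_mem_pos_iff (R.mem_Φ_of_mem_pos hα)).1 h)

lemma neg_mem_pos_of_notMem_pos (hα : α ∈ R.Φ) (h : α ∉ R.pos) : -α ∈ R.pos := by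
  rw [R.mem_pos_iff hα, not_lt] at h
  exact (R.neg_mem_pos_iff hα).2 (lt_of_le_of_ne h (R.f_ne α hα))

lemma s_apply_s_apply (hα : α ∈ R.Φ) (x : X) : R.s α (R.s α x) = x := by
  rw [R.s_apply α hα (R.s α x), R.s_apply α hα x, map_sub, map_zsmul, R.pairing_self α hα,
    smul_eq_mul]
  module

lemma s_add_s (hα : α ∈ R.Φ) : R.s α + R.s α = 0 := by
  ext x
  exact R.s_apply_s_apply hα x

lemma neg_s (hα : α ∈ R.Φ) : -R.s α = R.s α :=
  neg_eq_of_add_eq_zero_right (R.s_add_s hα)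

lemma coroot_neg (hα : α ∈ R.Φ) (x : X) : R.coroot (-α) x = -R.coroot α x := by
  rw [← R.s_apply_self hα, R.coroot_equivariant α hα α hα, R.neg_s hα, R.s_apply α hα,
    map_sub, map_zsmul, R.pairing_self α hα, smul_eq_mul]
  ring

lemma s_neg (hα : α ∈ R.Φ) : R.s (-α) = R.s α := by
  ext x
  rw [R.s_apply (-α) (R.neg_mem_Φ hα), R.s_apply α hα, R.coroot_neg hα, neg_smul, smul_neg,
    neg_neg]

lemma s_s_apply_add_s (hα : α ∈ R.Φ) (hθ : θ ∈ R.Φ) :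
    R.s (R.s α θ) + R.s α = R.s α + R.s θ := by
  ext x
  rw [AddAut.add_apply, AddAut.add_apply, R.s_apply _ (R.s_stable α hα θ hθ),
    R.coroot_equivariant α hα θ hθ, R.neg_s hα, R.s_apply_s_apply hα, R.s_apply θ hθ x,
    map_sub, map_zsmul]

lemma s_mem_W (hα : α ∈ R.Φ) : R.s α ∈ R.W :=
  AddSubgroup.subset_closure ⟨α, hα, rfl⟩

lemma mem_Φ_and_coroot_apply_of_mem_W {w : AddAut X} (hw : w ∈ R.W) :
    ∀ α ∈ R.Φ, w α ∈ R.Φ ∧ ∀ x, R.coroot (w α) (w x) = R.coroot α x := by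
  have hgen : ∀ β ∈ R.Φ, ∀ α ∈ R.Φ,
      R.s β α ∈ R.Φ ∧ ∀ x, R.coroot (R.s β α) (R.s β x) = R.coroot α x := fun β hβ α hα =>
    ⟨R.s_stable β hβ α hα, fun x => by
      rw [R.coroot_equivariant β hβ α hα, R.neg_s hβ, R.s_apply_s_apply hβ]⟩
  induction hw using AddSubgroup.closure_induction'' with
  | mem _ hg => obtain ⟨β, hβ, rfl⟩ := hg; exact hgen β hβ
  | neg_mem _ hg => obtain ⟨β, hβ, rfl⟩ := hg; rw [R.neg_s hβ]; exact hgen β hβ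
  | zero => exact fun α hα => ⟨hα, fun _ => rfl⟩
  | add w₁ w₂ _ _ ih₁ ih₂ =>
    intro α hα
    obtain ⟨hα₂, h₂⟩ := ih₂ α hα
    obtain ⟨hα₁, h₁⟩ := ih₁ _ hα₂
    exact ⟨hα₁, fun x => (h₁ (w₂ x)).trans (h₂ x)⟩

lemma mem_Φ_of_mem_W {w : AddAut X} (hw : w ∈ R.W) (hα : α ∈ R.Φ) : w α ∈ R.Φ :=
  (R.mem_Φ_and_coroot_apply_of_mem_W hw α hα).1

lemma coroot_apply_apply_of_mem_W {w : AddAut X} (hw : w ∈ R.W) (hα : α ∈ R.Φ) (x : X) :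
    R.coroot (w α) (w x) = R.coroot α x :=
  (R.mem_Φ_and_coroot_apply_of_mem_W hw α hα).2 x

def rootForm (x y : X) : ℤ := ∑ γ ∈ R.Φ, R.coroot γ x * R.coroot γ y

lemma rootForm_comm (x y : X) : R.rootForm x y = R.rootForm y x := by
  simp only [rootForm, mul_comm]

lemma rootForm_add_right (x y z : X) :
    R.rootForm x (y + z) = R.rootForm x y + R.rootForm x z := by
  simp only [rootForm, map_add, mul_add, Finset.sum_add_distrib]

lemma rootForm_s_apply_s_apply (hβ : β ∈ R.Φ) (x y : X) :
    R.rootForm (R.s β x) (R.s β y) = R.rootForm x y := by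
  refine Finset.sum_nbij' (R.s β) (R.s β) (fun γ hγ => R.s_stable β hβ γ hγ)
    (fun γ hγ => R.s_stable β hβ γ hγ) (fun γ _ => R.s_apply_s_apply hβ γ)
    (fun γ _ => R.s_apply_s_apply hβ γ) (fun γ hγ => ?_)
  rw [R.coroot_equivariant β hβ γ hγ, R.coroot_equivariant β hβ γ hγ, R.neg_s hβ]

lemma rootForm_self_pos (hα : α ∈ R.Φ) : 0 < R.rootForm α α := by
  refine lt_of_lt_of_le ?_ (Finset.single_le_sum (fun γ _ => mul_self_nonneg (R.coroot γ α)) hα)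
  rw [R.pairing_self α hα]
  norm_num

lemma rootForm_sq_le (x y : X) : R.rootForm x y ^ 2 ≤ R.rootForm x x * R.rootForm y y := by
  simpa only [rootForm, sq] using
    Finset.sum_mul_sq_le_sq_mul_sq R.Φ (R.coroot · x) (R.coroot · y)

lemma two_mul_rootForm (hβ : β ∈ R.Φ) (x : X) :
    2 * R.rootForm x β = R.coroot β x * R.rootForm β β := by
  have h := R.rootForm_s_apply_s_apply hβ x β
  rw [R.s_apply_self hβ, R.s_apply β hβ x] at h
  simp only [rootForm, map_neg, map_sub, map_zsmul, smul_eq_mul, mul_neg, sub_mul,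
    Finset.sum_neg_distrib, Finset.sum_sub_distrib, ← Finset.mul_sum, mul_assoc] at h
  simp only [rootForm]
  linarith

lemma coroot_pos_comm (hα : α ∈ R.Φ) (hβ : β ∈ R.Φ) (h : 0 < R.coroot β α) :
    0 < R.coroot α β := by
  have hp := R.two_mul_rootForm hβ α
  have hq := R.two_mul_rootForm hα β
  rw [R.rootForm_comm] at hq
  have := mul_pos h (R.rootForm_self_pos hβ)
  exact pos_of_mul_pos_left (by linarith) (R.rootForm_self_pos hα).le

lemma coroot_mul_coroot_le_four (hα : α ∈ R.Φ) (hβ : β ∈ R.Φ) :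
    R.coroot β α * R.coroot α β ≤ 4 := by
  have hp := R.two_mul_rootForm hβ α
  have hq := R.two_mul_rootForm hα β
  rw [R.rootForm_comm] at hq
  have hCS := R.rootForm_sq_le α β
  have hpos := mul_pos (R.rootForm_self_pos hα) (R.rootForm_self_pos hβ)
  have h4 : R.coroot β α * R.coroot α β * (R.rootForm α α * R.rootForm β β) =
      4 * R.rootForm α β ^ 2 := by
    linear_combination -(R.coroot α β * R.rootForm α α) * hp - 2 * R.rootForm α β * hq
  exact le_of_mul_le_mul_right (by linarith) hpos

/-- If `⟨α, β∨⟩ = ⟨β, α∨⟩ = 2`, then `s_α s_β` translates along `2 (α - β)`, producing the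
infinitely many roots `β + 2k (α - β)`. -/
lemma eq_of_coroot_eq_two (hα : α ∈ R.Φ) (hβ : β ∈ R.Φ) (hαβ : R.coroot β α = 2)
    (hβα : R.coroot α β = 2) : α = β := by
  have hstring : ∀ k : ℕ, β + (2 * k : ℤ) • (α - β) ∈ R.Φ := by
    intro k
    induction k with
    | zero => simpa using hβ
    | succ k ih =>
      have := R.s_stable α hα _ (R.s_stable β hβ _ ih)
      rw [R.s_apply β hβ, R.s_apply α hα] at this
      simp only [map_add, map_sub, map_zsmul, hαβ, hβα, R.pairing_self α hα,
        R.pairing_self β hβ, smul_eq_mul] at this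
      convert this using 1
      push_cast
      module
  by_contra hne
  have hinj : Function.Injective (fun k : ℕ => β + (2 * k : ℤ) • (α - β)) := by
    intro j k h
    simpa using smul_left_injective ℤ (sub_ne_zero.2 hne) (add_left_cancel h)
  exact Set.infinite_range_of_injective hinj
    (R.Φ.finite_toSet.subset (Set.range_subset_iff.2 hstring))

lemma sub_mem_Φ (hα : α ∈ R.Φ) (hβ : β ∈ R.Φ) (hne : α ≠ β) (h : 0 < R.coroot β α) :
    α - β ∈ R.Φ := by
  have hq := R.coroot_pos_comm hα hβ h
  have h4 := R.coroot_mul_coroot_le_four hα hβ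
  have hcases : R.coroot β α = 1 ∨ R.coroot α β = 1 ∨
      (R.coroot β α = 2 ∧ R.coroot α β = 2) := by
    generalize R.coroot β α = p at *
    generalize R.coroot α β = q at *
    have : p ≤ 4 := by nlinarith
    have : q ≤ 4 := by nlinarith
    interval_cases p <;> interval_cases q <;> omega
  rcases hcases with hp1 | hq1 | ⟨hp2, hq2⟩
  · simpa [R.s_apply β hβ, hp1] using R.s_stable β hβ α hα
  · simpa [R.s_apply α hα, hq1] using R.neg_mem_Φ (R.s_stable α hα β hβ)
  · exact absurd (R.eq_of_coroot_eq_two hα hβ hp2 hq2) hne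

lemma pos_induction {P : X → Prop}
    (h : ∀ γ ∈ R.pos, (∀ β ∈ R.pos, R.f β < R.f γ → P β) → P γ) : ∀ γ ∈ R.pos, P γ := by
  intro γ
  refine WellFounded.induction (C := fun γ => γ ∈ R.pos → P γ)
    (measure fun γ => (R.pos.filter (fun β => R.f β < R.f γ)).card).wf γ ?_
  intro γ ih hγ
  refine h γ hγ fun β hβ hlt => ih β (Finset.card_lt_card ?_) hβ
  exact Finset.ssubset_iff_of_subset
    (Finset.monotone_filter_right _ fun _ _ h => h.trans hlt) |>.2 ⟨β, by simp [hβ, hlt]⟩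

def IsSimpleRoot (α : X) : Prop := α ∈ R.pos ∧ ∀ β ∈ R.pos, ∀ γ ∈ R.pos, α ≠ β + γ

lemma sub_mem_pos_of_isSimpleRoot (hα : R.IsSimpleRoot α) (hγ : γ ∈ R.pos) (hne : γ ≠ α)
    (h : 0 < R.coroot α γ) : γ - α ∈ R.pos := by
  have hsub := R.sub_mem_Φ (R.mem_Φ_of_mem_pos hγ) (R.mem_Φ_of_mem_pos hα.1) hne h
  by_contra hneg
  have := R.neg_mem_pos_of_notMem_pos hsub hneg
  rw [neg_sub] at this
  exact hα.2 γ hγ (α - γ) this (by abel)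

lemma s_apply_mem_pos_of_isSimpleRoot (hα : R.IsSimpleRoot α) :
    ∀ γ ∈ R.pos, γ ≠ α → R.s α γ ∈ R.pos := by
  have hαΦ := R.mem_Φ_of_mem_pos hα.1
  refine R.pos_induction fun γ hγ ih hne => ?_
  by_contra hsγ
  -- `γ - α` is a smaller counterexample: `s_α (γ - α) = -(δ - α)` with `δ - α` positive
  set δ := -R.s α γ with hδdef
  have hsγΦ := R.s_stable α hαΦ γ (R.mem_Φ_of_mem_pos hγ)
  have hδ : δ ∈ R.pos := R.neg_mem_pos_of_notMem_pos hsγΦ hsγ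
  have hfs := (R.neg_mem_pos_iff hsγΦ).1 hδ
  rw [R.s_apply α hαΦ, map_sub, map_zsmul, zsmul_eq_mul] at hfs
  have hc : 0 < R.coroot α γ := by
    have := R.f_pos_of_mem_pos hγ
    have := R.f_pos_of_mem_pos hα.1
    have : (0 : ℝ) < R.coroot α γ := by nlinarith
    exact_mod_cast this
  have hδα : δ ≠ α := by
    intro h
    rw [hδdef, neg_eq_iff_eq_neg, ← R.s_apply_self hαΦ] at h
    exact hne ((R.s α).injective h)
  have hcδ : R.coroot α δ = R.coroot α γ := by
    rw [hδdef, R.s_apply α hαΦ, map_neg, map_sub, map_zsmul, R.pairing_self α hαΦ, smul_eq_mul]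
    ring
  have hγα : γ - α ≠ α := by
    intro h
    have := R.reduced α hαΦ 2
      (by rw [two_zsmul, ← eq_add_of_sub_eq h]; exact R.mem_Φ_of_mem_pos hγ)
    omega
  have hlt : R.f (γ - α) < R.f γ := by
    rw [map_sub]
    linarith [R.f_pos_of_mem_pos hα.1]
  have := ih (γ - α) (R.sub_mem_pos_of_isSimpleRoot hα hγ hne hc) hlt hγα
  rw [show R.s α (γ - α) = -(δ - α) by rw [map_sub, R.s_apply_self hαΦ, hδdef]; abel] at this
  exact R.neg_notMem_pos (R.sub_mem_pos_of_isSimpleRoot hα hδ hδα (hcδ ▸ hc)) this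

lemma exists_isSimpleRoot_rootForm_pos (x : X) :
    ∀ γ ∈ R.pos, 0 < R.rootForm x γ → ∃ α, R.IsSimpleRoot α ∧ 0 < R.rootForm x α := by
  refine R.pos_induction fun γ hγ ih hxγ => ?_
  by_cases hsimple : R.IsSimpleRoot γ
  · exact ⟨γ, hsimple, hxγ⟩
  obtain ⟨β, hβ, δ, hδ, rfl⟩ : ∃ β ∈ R.pos, ∃ δ ∈ R.pos, γ = β + δ := by
    simpa [IsSimpleRoot, hγ] using hsimple
  have hfβ := R.f_pos_of_mem_pos hβ
  have hfδ := R.f_pos_of_mem_pos hδ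
  rw [R.rootForm_add_right] at hxγ
  rcases lt_or_ge 0 (R.rootForm x β) with h | h
  · exact ih β hβ (by rw [map_add]; linarith) h
  · exact ih δ hδ (by rw [map_add]; linarith) (by linarith)

lemma exists_isSimpleRoot_coroot_pos (hγ : γ ∈ R.pos) :
    ∃ α, R.IsSimpleRoot α ∧ 0 < R.coroot α γ := by
  obtain ⟨α, hα, hpos⟩ := R.exists_isSimpleRoot_rootForm_pos γ γ hγ
    (R.rootForm_self_pos (R.mem_Φ_of_mem_pos hγ))
  have h2 := R.two_mul_rootForm (R.mem_Φ_of_mem_pos hα.1) γ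
  exact ⟨α, hα, pos_of_mul_pos_left (by linarith)
    (R.rootForm_self_pos (R.mem_Φ_of_mem_pos hα.1)).le⟩

def word (l : List X) : AddAut X := (l.map R.s).sum

lemma word_append (l₁ l₂ : List X) : R.word (l₁ ++ l₂) = R.word l₁ + R.word l₂ := by
  simp [word]

lemma word_singleton (α : X) : R.word [α] = R.s α := by
  simp [word]

lemma exists_word_eq_s (hγ : γ ∈ R.Φ) :
    ∃ l : List X, (∀ α ∈ l, R.IsSimpleRoot α) ∧ R.s γ = R.word l := by
  have hpos : ∀ γ ∈ R.pos, ∃ l : List X, (∀ α ∈ l, R.IsSimpleRoot α) ∧ R.s γ = R.word l := by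
    refine R.pos_induction fun γ hγ ih => ?_
    by_cases hsimple : R.IsSimpleRoot γ
    · exact ⟨[γ], by simpa using hsimple, (R.word_singleton γ).symm⟩
    obtain ⟨α, hα, hc⟩ := R.exists_isSimpleRoot_coroot_pos hγ
    have hαΦ := R.mem_Φ_of_mem_pos hα.1
    have hβ := R.s_apply_mem_pos_of_isSimpleRoot hα γ hγ (fun h => hsimple (h ▸ hα))
    have hlt : R.f (R.s α γ) < R.f γ := by
      rw [R.s_apply α hαΦ, map_sub, map_zsmul, zsmul_eq_mul]
      have : (1 : ℝ) ≤ R.coroot α γ := by exact_mod_cast hc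
      nlinarith [R.f_pos_of_mem_pos hα.1]
    obtain ⟨l, hl, hsβ⟩ := ih _ hβ hlt
    refine ⟨α :: (l ++ [α]), List.forall_mem_cons.2
      ⟨hα, List.forall_mem_append.2 ⟨hl, List.forall_mem_singleton.2 hα⟩⟩, ?_⟩
    have hconj := R.s_s_apply_add_s hαΦ (R.mem_Φ_of_mem_pos hβ)
    rw [R.s_apply_s_apply hαΦ, ← eq_sub_iff_add_eq, sub_eq_add_neg, R.neg_s hαΦ] at hconj
    rw [hconj, hsβ, ← R.word_singleton α, ← R.word_append, ← R.word_append]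
    rfl
  by_cases h : γ ∈ R.pos
  · exact hpos γ h
  · rw [← R.s_neg hγ]
    exact hpos _ (R.neg_mem_pos_of_notMem_pos hγ h)

lemma exists_word_eq {w : AddAut X} (hw : w ∈ R.W) :
    ∃ l : List X, (∀ α ∈ l, R.IsSimpleRoot α) ∧ w = R.word l := by
  induction hw using AddSubgroup.closure_induction'' with
  | mem _ hg => obtain ⟨β, hβ, rfl⟩ := hg; exact R.exists_word_eq_s hβ
  | neg_mem _ hg => obtain ⟨β, hβ, rfl⟩ := hg; rw [R.neg_s hβ]; exact R.exists_word_eq_s hβ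
  | zero => exact ⟨[], by simp, rfl⟩
  | add _ _ _ _ ih₁ ih₂ =>
    obtain ⟨l₁, hl₁, rfl⟩ := ih₁
    obtain ⟨l₂, hl₂, rfl⟩ := ih₂
    exact ⟨l₁ ++ l₂, List.forall_mem_append.2 ⟨hl₁, hl₂⟩, (R.word_append l₁ l₂).symm⟩

/-- The exchange condition. -/
lemma exists_word_add_s_eq (l : List X) (hl : ∀ α ∈ l, R.IsSimpleRoot α) (hθ : θ ∈ R.pos)
    (hneg : -(R.word l θ) ∈ R.pos) :
    ∃ l' : List X, (∀ α ∈ l', R.IsSimpleRoot α) ∧ l'.length + 1 = l.length ∧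
      R.word l + R.s θ = R.word l' := by
  induction l using List.reverseRecOn generalizing θ with
  | nil => exact absurd hneg (R.neg_notMem_pos (by simpa [word] using hθ))
  | append_singleton t a ih =>
    have ha : R.IsSimpleRoot a := hl a (by simp)
    have haΦ := R.mem_Φ_of_mem_pos ha.1
    rw [R.word_append, R.word_singleton] at hneg ⊢
    by_cases hθa : θ = a
    · subst hθa
      exact ⟨t, fun α hα => hl α (by simp [hα]), by simp,
        by rw [add_assoc, R.s_add_s haΦ, add_zero]⟩
    obtain ⟨t', ht', hlen, heq⟩ := ih (fun α hα => hl α (by simp [hα]))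
      (R.s_apply_mem_pos_of_isSimpleRoot ha θ hθ hθa) hneg
    refine ⟨t' ++ [a], List.forall_mem_append.2 ⟨ht', List.forall_mem_singleton.2 ha⟩,
      by simp [← hlen], ?_⟩
    rw [R.word_append, R.word_singleton, ← heq, add_assoc, add_assoc,
      R.s_s_apply_add_s haΦ (R.mem_Φ_of_mem_pos hθ)]

lemma word_eq_zero_of_forall_mem_pos (l : List X) (hl : ∀ α ∈ l, R.IsSimpleRoot α)
    (hpos : ∀ γ ∈ R.pos, R.word l γ ∈ R.pos) : R.word l = 0 := by
  induction h : l.length using Nat.strong_induction_on generalizing l with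
  | _ n ih =>
  rcases l.eq_nil_or_concat' with rfl | ⟨t, a, rfl⟩
  · rfl
  have ha : R.IsSimpleRoot a := hl a (by simp)
  have hwa := hpos a ha.1
  rw [R.word_append, R.word_singleton, AddAut.add_apply,
    R.s_apply_self (R.mem_Φ_of_mem_pos ha.1), map_neg] at hwa
  obtain ⟨t', ht', hlen, heq⟩ :=
    R.exists_word_add_s_eq t (fun α hα => hl α (by simp [hα])) ha.1 hwa
  rw [R.word_append, R.word_singleton, heq] at hpos ⊢
  exact ih t'.length (by simp at h; omega) t' ht' hpos rfl

lemma eq_zero_of_forall_mem_pos {w : AddAut X} (hw : w ∈ R.W)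
    (hpos : ∀ γ ∈ R.pos, w γ ∈ R.pos) : w = 0 := by
  obtain ⟨l, hl, rfl⟩ := R.exists_word_eq hw
  exact R.word_eq_zero_of_forall_mem_pos l hl hpos

lemma eq_of_forall_mem_pos_iff {u v : AddAut X} (hu : u ∈ R.W) (hv : v ∈ R.W)
    (h : ∀ α ∈ R.pos, u α ∈ R.pos ↔ v α ∈ R.pos) : u = v := by
  refine add_neg_eq_zero.1 (R.eq_zero_of_forall_mem_pos (add_mem hu (neg_mem hv)) ?_)
  intro γ hγ
  have hβ := R.mem_Φ_of_mem_W (neg_mem hv) (R.mem_Φ_of_mem_pos hγ)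
  have hvβ : v ((-v) γ) = γ := AddAut.apply_neg_self X v γ
  rw [AddAut.add_apply]
  by_cases hpos : (-v) γ ∈ R.pos
  · exact (h _ hpos).2 (hvβ.symm ▸ hγ)
  · have hneg := R.neg_mem_pos_of_notMem_pos hβ hpos
    by_contra hu'
    refine R.neg_notMem_pos hγ ?_
    rw [← hvβ, ← map_neg, ← h _ hneg, map_neg]
    exact R.neg_mem_pos_of_notMem_pos (R.mem_Φ_of_mem_W hu hβ) hu'

lemma f_neg_of_f_s_apply_neg {w : AddAut X} (hγ : γ ∈ R.pos) (hwγ : R.f (w γ) < 0)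
    (hδ : δ ∈ R.pos) (hsδ : R.f (R.s γ δ) < 0) (hwsδ : R.f (w (R.s γ δ)) < 0) :
    R.f (w δ) < 0 := by
  rw [R.s_apply γ (R.mem_Φ_of_mem_pos hγ)] at hsδ hwsδ
  simp only [map_sub, map_zsmul, zsmul_eq_mul] at hsδ hwsδ
  have := R.f_pos_of_mem_pos hγ
  have := R.f_pos_of_mem_pos hδ
  have hc : (0 : ℝ) < R.coroot γ δ := by nlinarith
  nlinarith

section Length

variable [DecidableEq X]

def inversions (w : AddAut X) : Finset X := R.pos.filter fun α => -(w α) ∈ R.pos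

lemma ite_s_apply_mem_inversions_erase {w : AddAut X} (hw : w ∈ R.W) (hγ : γ ∈ R.pos)
    (hwγ : -(w γ) ∈ R.pos) (hδ : δ ∈ R.inversions (w + R.s γ)) :
    (if R.s γ δ ∈ R.pos then R.s γ δ else δ) ∈ (R.inversions w).erase γ := by
  have hγΦ := R.mem_Φ_of_mem_pos hγ
  obtain ⟨hδ, hwsδ⟩ := Finset.mem_filter.1 hδ
  have hsδΦ := R.s_stable γ hγΦ δ (R.mem_Φ_of_mem_pos hδ)
  rw [AddAut.add_apply] at hwsδ
  simp only [Finset.mem_erase, inversions, Finset.mem_filter]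
  split_ifs with hsδ
  · refine ⟨fun h => ?_, hsδ, hwsδ⟩
    have := R.s_apply_s_apply hγΦ δ
    rw [h, R.s_apply_self hγΦ] at this
    exact R.neg_notMem_pos hγ (this ▸ hδ)
  refine ⟨?_, hδ, ?_⟩
  · rintro rfl
    rw [R.s_apply_self hγΦ, map_neg, neg_neg] at hwsδ
    exact R.neg_notMem_pos hwsδ hwγ
  rw [R.neg_mem_pos_iff (R.mem_Φ_of_mem_W hw (R.mem_Φ_of_mem_pos hδ))]
  rw [R.neg_mem_pos_iff (R.mem_Φ_of_mem_W hw hsδΦ)] at hwsδ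
  rw [R.mem_pos_iff hsδΦ, not_lt] at hsδ
  exact R.f_neg_of_f_s_apply_neg hγ
    ((R.neg_mem_pos_iff (R.mem_Φ_of_mem_W hw hγΦ)).1 hwγ) hδ
    (lt_of_le_of_ne hsδ (R.f_ne _ hsδΦ)) hwsδ

lemma lenW_add_s_lt {w : AddAut X} (hw : w ∈ R.W) (hγ : γ ∈ R.pos) (hwγ : -(w γ) ∈ R.pos) :
    R.lenW (w + R.s γ) < R.lenW w := by
  have hγΦ := R.mem_Φ_of_mem_pos hγ
  show (R.inversions _).card < (R.inversions w).card
  refine (Finset.card_le_card_of_injOn _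
    (fun δ hδ => R.ite_s_apply_mem_inversions_erase hw hγ hwγ hδ) ?_).trans_lt
    (Finset.card_erase_lt_of_mem (Finset.mem_filter.2 ⟨hγ, hwγ⟩))
  intro δ₁ h₁ δ₂ h₂ h
  replace h₁ := (Finset.mem_filter.1 h₁).1
  replace h₂ := (Finset.mem_filter.1 h₂).1
  dsimp only at h
  split_ifs at h with hs₁ hs₂ hs₂
  · exact (R.s γ).injective h
  · rw [← h, R.s_apply_s_apply hγΦ] at hs₂
    exact absurd h₁ hs₂
  · rw [h, R.s_apply_s_apply hγΦ] at hs₁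
    exact absurd h₂ hs₁
  · exact h

lemma lenAff_eq_sum {w : AddAut X} (hw : w ∈ R.W) (lam : X) :
    R.lenAff w lam = ∑ α ∈ R.pos,
      if w α ∈ R.pos then (R.coroot α lam).natAbs else (1 + R.coroot α lam).natAbs := by
  rw [Finset.sum_ite, lenAff]
  congr 2
  ext α
  simp only [Finset.mem_filter, and_congr_right_iff]
  intro hα
  have := R.mem_Φ_of_mem_W hw (R.mem_Φ_of_mem_pos hα)
  exact ⟨fun h h' => R.neg_notMem_pos h' h, R.neg_mem_pos_of_notMem_pos this⟩

/-- Otherwise `v s_α` would be a shorter element with `v s_α λ = v λ`. -/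
lemma apply_mem_pos_of_coroot_eq_zero {lam : X} {v : AddAut X} (hv : v ∈ R.W)
    (hdom : R.IsDominant (v lam))
    (hmin : ∀ u : AddAut X, u ∈ R.W → R.IsDominant (u lam) → R.lenW v ≤ R.lenW u)
    (hα : α ∈ R.pos) (h0 : R.coroot α lam = 0) : v α ∈ R.pos := by
  have hαΦ := R.mem_Φ_of_mem_pos hα
  by_contra hneg
  have hvs : (v + R.s α) lam = v lam := by
    rw [AddAut.add_apply, R.s_apply α hαΦ, h0, zero_smul, sub_zero]
  exact (R.lenW_add_s_lt hv hα (R.neg_mem_pos_of_notMem_pos (R.mem_Φ_of_mem_W hv hαΦ) hneg)).not_ge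
    (hmin _ (add_mem hv (R.s_mem_W hαΦ)) (hvs ▸ hdom))

lemma apply_mem_pos_iff_coroot_nonneg {lam : X} {v : AddAut X} (hv : v ∈ R.W)
    (hdom : R.IsDominant (v lam))
    (hmin : ∀ u : AddAut X, u ∈ R.W → R.IsDominant (u lam) → R.lenW v ≤ R.lenW u) :
    ∀ α ∈ R.pos, v α ∈ R.pos ↔ 0 ≤ R.coroot α lam := by
  intro α hα
  have hαΦ := R.mem_Φ_of_mem_pos hα
  have hvα := R.mem_Φ_of_mem_W hv hαΦ
  refine ⟨fun h => R.coroot_apply_apply_of_mem_W hv hαΦ lam ▸ hdom _ h, fun h => ?_⟩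
  rcases h.eq_or_lt with h0 | hpos
  · exact R.apply_mem_pos_of_coroot_eq_zero hv hdom hmin hα h0.symm
  by_contra hneg
  have := hdom _ (R.neg_mem_pos_of_notMem_pos hvα hneg)
  rw [R.coroot_neg hvα, R.coroot_apply_apply_of_mem_W hv hαΦ] at this
  omega

end Length

end RootSystemData

/-- Let `λ ∈ X` and let `v ∈ W` be an element of minimal length `ℓ(v)` such that `vλ` is
dominant.  Then `v t_λ` is the unique element of minimal length in the coset
`W t_λ = {u t_λ : u ∈ W} ⊂ W_aff`; that is, `ℓ(v t_λ) ≤ ℓ(u t_λ)` for every `u ∈ W`, with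
equality only for `u = v`. -/
theorem w_lambda_unique_min
    {X : Type*} [AddCommGroup X] [Module.Free ℤ X] [Module.Finite ℤ X] [DecidableEq X]
    (R : RootSystemData X) (lam : X) (v : AddAut X) (hv : v ∈ R.W)
    (hdom : R.IsDominant (v lam))
    (hmin : ∀ u : AddAut X, u ∈ R.W → R.IsDominant (u lam) → R.lenW v ≤ R.lenW u) :
    ∀ u : AddAut X, u ∈ R.W →
      R.lenAff v lam ≤ R.lenAff u lam ∧ (R.lenAff u lam = R.lenAff v lam → u = v) := by
  intro u hu
  have hsign := R.apply_mem_pos_iff_coroot_nonneg hv hdom hmin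
  have hv_min : R.lenAff v lam =
      ∑ α ∈ R.pos, min (R.coroot α lam).natAbs (1 + R.coroot α lam).natAbs := by
    rw [R.lenAff_eq_sum hv]
    refine Finset.sum_congr rfl fun α hα => ?_
    rw [if_congr (hsign α hα) rfl rfl]
    split_ifs <;> omega
  rw [hv_min, R.lenAff_eq_sum hu]
  refine ⟨Finset.sum_min_le_sum_ite _ _ _ _,
    fun h => R.eq_of_forall_mem_pos_iff hu hv fun α hα => ?_⟩
  rw [Finset.iff_lt_of_sum_ite_eq_sum_min (fun _ _ => by omega) h α hα, hsign α hα]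
  omega
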